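/- For every a ∈ (0,1) and every z > 0, ψ(z+a) − ψ(z) − a/z > 0, where ψ is the digamma function. -/

import Mathlib

open Real

/-- The digamma function `ψ = Γ'/Γ`. -/
noncomputable def digamma (x : ℝ) : ℝ := deriv Real.Gamma x / Real.Gamma x

lemma Gamma_diffAt {x : ℝ} (hx : 0 < x) : DifferentiableAt ℝ Real.Gamma x :=
  Real.differentiableAt_Gamma fun m => by
    have : (0:ℝ) < m + 1 := by positivity
    intro h; rw [h] at hx
    have h2 : -(m:ℝ) ≤ 0 := neg_nonpos.mpr (Nat.cast_nonneg m)
    linarith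

lemma hasDerivAt_logGamma {x : ℝ} (hx : 0 < x) :
    HasDerivAt (fun y => Real.log (Real.Gamma y)) (digamma x) x :=
  ((Gamma_diffAt hx).hasDerivAt).log (Real.Gamma_pos_of_pos hx).ne'

lemma deriv_logGamma {x : ℝ} (hx : 0 < x) :
    deriv (Real.log ∘ Real.Gamma) x = digamma x :=
  (hasDerivAt_logGamma hx).deriv

lemma digamma_mono {x y : ℝ} (hx : 0 < x) (hxy : x ≤ y) : digamma x ≤ digamma y := by
  have hy : 0 < y := lt_of_lt_of_le hx hxy
  have hmono := Real.convexOn_log_Gamma.monotoneOn_deriv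
    (fun w hw => ((Gamma_diffAt hw).log (Real.Gamma_pos_of_pos hw).ne'))
  have := hmono (Set.mem_Ioi.2 hx) (Set.mem_Ioi.2 hy) hxy
  rwa [deriv_logGamma hx, deriv_logGamma hy] at this

lemma digamma_add_one {x : ℝ} (hx : 0 < x) : digamma (x + 1) = digamma x + 1 / x := by
  have h1 : HasDerivAt (fun y : ℝ => Real.log (Real.Gamma (y + 1))) (digamma (x + 1)) x := by
    have := (hasDerivAt_logGamma (by linarith : (0:ℝ) < x + 1)).comp x
      ((hasDerivAt_id x).add_const 1)
    rw [mul_one] at this; exact this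
  have h2 : HasDerivAt (fun y : ℝ => Real.log y + Real.log (Real.Gamma y))
      (1 / x + digamma x) x := by
    simp only [one_div]; exact (Real.hasDerivAt_log hx.ne').add (hasDerivAt_logGamma hx)
  have heq : (fun y : ℝ => Real.log (Real.Gamma (y + 1))) =ᶠ[nhds x]
      (fun y : ℝ => Real.log y + Real.log (Real.Gamma y)) := by
    filter_upwards [eventually_gt_nhds hx] with y hy
    rw [Real.Gamma_add_one hy.ne', Real.log_mul hy.ne' (Real.Gamma_pos_of_pos hy).ne']
  have h3 := (h1.congr_of_eventuallyEq heq.symm).unique h2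
  linarith

theorem digamma_diff_pos (a : ℝ) (ha : a ∈ Set.Ioo (0 : ℝ) 1) (z : ℝ) (hz : 0 < z) :
    0 < digamma (z + a) - digamma z - a / z := by
  obtain ⟨ha0, ha1⟩ := ha
  set g : ℝ → ℝ := fun w => digamma (w + a) - digamma w - a / w with hg
  have cpos : ∀ w : ℝ, 0 < w → 0 < (1 - a) / w + a / (w + 1) - 1 / (w + a) := by
    intro w hw
    have hw1 : (0:ℝ) < w + 1 := by linarith
    have hwa : (0:ℝ) < w + a := by linarith
    have key : (1 - a) / w + a / (w + 1) = (w + 1 - a) / (w * (w + 1)) := by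
      field_simp; ring
    rw [key, sub_pos, div_lt_div_iff₀ hwa (by positivity)]
    nlinarith
  have step : ∀ w : ℝ, 0 < w →
      g w = ((1 - a) / w + a / (w + 1) - 1 / (w + a)) + g (w + 1) := by
    intro w hw
    have hwa : (0:ℝ) < w + a := by linarith
    have e1 : digamma (w + 1 + a) = digamma (w + a) + 1 / (w + a) := by
      rw [show w + 1 + a = (w + a) + 1 by ring, digamma_add_one hwa]
    have e2 : digamma (w + 1) = digamma w + 1 / w := digamma_add_one hw
    simp only [hg, e1, e2]
    ring
  have gnonneg : ∀ w : ℝ, 0 < w → 0 ≤ g w := by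
    intro w hw
    have hiter : ∀ n : ℕ, g (w + n) ≤ g w := by
      intro n
      induction n with
      | zero => simp
      | succ n ih =>
        have hwn : (0:ℝ) < w + n := by positivity
        have := step (w + n) hwn
        push_cast
        calc g (w + (n + 1)) = g (w + n + 1) := by ring_nf
          _ ≤ g (w + n) := by
              rw [this]; linarith [cpos (w + n) hwn]
          _ ≤ g w := ih
    have hlb : ∀ n : ℕ, -(a / (w + n)) ≤ g (w + n) := by
      intro n
      have hwn : (0:ℝ) < w + n := by positivity
      have hm : digamma (w + n) ≤ digamma (w + n + a) :=
        digamma_mono hwn (by linarith)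
      simp only [hg]
      linarith
    have htend : Filter.Tendsto (fun n : ℕ => -(a / (w + n))) Filter.atTop (nhds 0) := by
      rw [show (0:ℝ) = -0 by ring]
      refine Filter.Tendsto.neg ?_
      apply Filter.Tendsto.div_atTop tendsto_const_nhds
      exact Filter.tendsto_atTop_add_const_left _ w tendsto_natCast_atTop_atTop
    have : ∀ n : ℕ, -(a / (w + n)) ≤ g w := fun n => le_trans (hlb n) (hiter n)
    exact le_of_tendsto' htend this
  have hz1 : (0:ℝ) < z + 1 := by linarith
  have := step z hz
  have h2 := gnonneg (z + 1) hz1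
  have h3 := cpos z hz
  show 0 < g z
  rw [this]
  have h4 := add_pos_of_pos_of_nonneg h3 h2
  linarith
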